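/- For all natural numbers n and k with 0 ≤ k ≤ n, the polynomial (z − 1)^{n−k} divides the circular Laguerre polynomial L_{n,k}(z) in ℂ[z]. -/
import Mathlib

open Polynomial Finset

lemma circ_base_aux (n : ℕ) :
    (X - C (1:ℂ))^n = ∑ j ∈ Finset.range (n+1), C ((-1)^(n-j) * (n.choose j : ℂ)) * X ^ j := by
  rw [sub_pow]
  refine Finset.sum_congr rfl fun j hj => ?_
  simp only [Finset.mem_range] at hj
  simp [map_mul, map_pow, mul_comm, mul_assoc, mul_left_comm]
  left
  rw [show j + n = (n - j) + 2*j by omega, pow_add, pow_mul]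
  simp

/-- The circular Laguerre polynomial
`L_{n,k}(z) = i^k ∑_{j=0}^n (−1)^{n−j} C(n,j) (j − n/2)^k z^j`. -/
noncomputable def circLaguerre (n k : ℕ) : Polynomial ℂ :=
  ∑ j ∈ Finset.range (n + 1),
    Polynomial.C (Complex.I ^ k * (-1) ^ (n - j) * (n.choose j : ℂ) * ((j : ℂ) - n / 2) ^ k) *
      Polynomial.X ^ j

lemma circ_base (n : ℕ) : circLaguerre n 0 = (X - C (1:ℂ))^n := by
  rw [circ_base_aux, circLaguerre]
  exact Finset.sum_congr rfl fun j hj => by simp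

lemma hXd (j : ℕ) : (X:Polynomial ℂ) * derivative (X^j) = C (j:ℂ) * X^j := by
  cases j with
  | zero => simp
  | succ m => rw [derivative_X_pow]; push_cast; ring_nf

lemma circ_step (n k : ℕ) :
    circLaguerre n (k+1) =
      C Complex.I * (X * (circLaguerre n k).derivative - C ((n:ℂ)/2) * circLaguerre n k) := by
  rw [circLaguerre, circLaguerre, derivative_sum, Finset.mul_sum, Finset.mul_sum,
    ← Finset.sum_sub_distrib, Finset.mul_sum]
  refine Finset.sum_congr rfl fun j hj => ?_
  set c := Complex.I ^ k * (-1:ℂ) ^ (n - j) * (n.choose j : ℂ) * ((j : ℂ) - n / 2) ^ k with hc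
  rw [derivative_C_mul]
  rw [show (X:Polynomial ℂ) * (C c * derivative (X^j)) = C c * (X * derivative (X^j)) by ring]
  rw [hXd]
  rw [show C Complex.I * (C c * (C (j:ℂ) * X^j) - C ((n:ℂ)/2) * (C c * X^j))
      = C (Complex.I * (c * j - (n:ℂ)/2 * c)) * X^j by simp only [map_mul, map_sub]; ring]
  congr 1
  rw [hc]; ring

theorem stmt6 (n k : ℕ) (hk : k ≤ n) :
    (Polynomial.X - Polynomial.C (1 : ℂ)) ^ (n - k) ∣ circLaguerre n k := by
  induction k with
  | zero => rw [circ_base]; simp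
  | succ m ih =>
    obtain ⟨Q, hQ⟩ := ih (Nat.le_of_succ_le hk)
    have hr : n - m = (n - (m+1)) + 1 := by omega
    set r := n - (m+1) with hrdef
    rw [circ_step, hQ, hr]
    refine ⟨C Complex.I * (X * (C ((r:ℂ)+1) * Q
        + (X - C 1) * derivative Q)
        - C ((n:ℂ)/2) * ((X - C 1) * Q)), ?_⟩
    rw [derivative_mul, derivative_pow, derivative_X_sub_C, Nat.add_sub_cancel]
    push_cast
    rw [map_one]
    ring
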